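/- Every eigenvalue λ of the symmetric tridiagonal 1-D P_N flux matrix Ã (with entries Ã_{ℓ,ℓ+1} = Ã_{ℓ+1,ℓ} = (ℓ+1)/√((2ℓ+1)(2ℓ+3)) and zeros elsewhere) satisfies |λ| < 1. -/

import Mathlib

/-!
Writing an eigenvector as `v ℓ = √(2ℓ+1) x ℓ` turns the eigenvalue equation into the three-term
recurrence of the Legendre polynomials, `(2m+1) λ x_m = m x_{m-1} + (m+1) x_{m+1}`, together with the
boundary condition `x_{N+1} = 0`. If `|λ| ≥ 1`, look at the last index `m` where `|x|` is maximal: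
the right-hand side is then strictly smaller than `(2m+1) |x_m|` in absolute value, while the
left-hand side is at least that. Plain Gershgorin is not enough, since the off-diagonal entries
exceed `1/2` (`a₀ + a₁ > 1`).
-/

open Matrix

def extendByZero {R : Type*} [Zero R] {n : ℕ} (v : Fin n → R) (m : ℕ) : R :=
  if h : m < n then v ⟨m, h⟩ else 0

theorem mulVec_tridiag {R : Type*} [NonUnitalNonAssocSemiring R] {n : ℕ} (a : ℕ → R)
    (A : Matrix (Fin n) (Fin n) R)
    (hA : ∀ i j : Fin n, A i j = (if (j : ℕ) = i + 1 then a i else 0) +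
      (if (i : ℕ) = j + 1 then a j else 0))
    (v : Fin n → R) (m : ℕ) (hm : m < n) :
    (A *ᵥ v) ⟨m, hm⟩ = a m * extendByZero v (m + 1) +
      if m = 0 then 0 else a (m - 1) * extendByZero v (m - 1) := by
  have hv : ∀ j : Fin n, v j = extendByZero v j := fun j => by simp [extendByZero]
  simp only [mulVec, dotProduct, hA, hv]
  rw [Fin.sum_univ_eq_sum_range (fun k => ((if k = m + 1 then a m else 0) +
      (if m = k + 1 then a k else 0)) * extendByZero v k)]
  simp only [add_mul, Finset.sum_add_distrib, ite_mul, zero_mul, Finset.sum_ite_eq',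
    Finset.mem_range]
  congr 1
  · split_ifs with h
    · rfl
    · simp [extendByZero, h]
  · cases m with
    | zero => simp
    | succ k => simp [show k < n by omega]

noncomputable def fluxCoeff (ℓ : ℕ) : ℝ := (ℓ + 1) / √((2 * ℓ + 1) * (2 * ℓ + 3))

theorem fluxCoeff_mul_sqrt (ℓ : ℕ) :
    fluxCoeff ℓ * (√(2 * ℓ + 1) * √(2 * (ℓ + 1 : ℕ) + 1)) = ℓ + 1 := by
  rw [fluxCoeff, ← Real.sqrt_mul (by positivity)]
  push_cast
  field_simp
  ring_nf

-- At `m = 0` the truncated `m - 1` is harmless: its coefficient vanishes.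
theorem legendre_recurrence_of_mulVec_eq {N : ℕ} (A : Matrix (Fin (N + 1)) (Fin (N + 1)) ℝ)
    (hA : ∀ i j : Fin (N + 1), A i j = (if (j : ℕ) = i + 1 then fluxCoeff i else 0) +
      (if (i : ℕ) = j + 1 then fluxCoeff j else 0))
    {lam : ℝ} {v : Fin (N + 1) → ℝ} (heig : A *ᵥ v = lam • v)
    (x : ℕ → ℝ) (hx : ∀ k : ℕ, extendByZero v k = √(2 * k + 1) * x k) (m : ℕ) (hm : m ≤ N) :
    (2 * m + 1) * lam * x m = m * x (m - 1) + (m + 1) * x (m + 1) := by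
  have h := congrFun heig ⟨m, by omega⟩
  rw [mulVec_tridiag fluxCoeff A hA, Pi.smul_apply, smul_eq_mul,
    show v ⟨m, _⟩ = extendByZero v m by simp [extendByZero, show m < N + 1 by omega]] at h
  have hsq := Real.mul_self_sqrt (by positivity : (0 : ℝ) ≤ 2 * m + 1)
  have hcoeff := fluxCoeff_mul_sqrt m
  cases m with
  | zero =>
    simp only [if_true, add_zero, hx] at h
    push_cast at h hsq hcoeff ⊢
    linear_combination (-1) * h + (-lam * x 0) * hsq + x 1 * hcoeff
  | succ k =>
    have hcoeff' := fluxCoeff_mul_sqrt k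
    simp only [add_tsub_cancel_right, Nat.succ_ne_zero, if_false, hx] at h
    push_cast at h hsq hcoeff hcoeff' ⊢
    linear_combination (-√(2 * (k + 1) + 1)) * h + (-lam * x (k + 1)) * hsq +
      x (k + 2) * hcoeff + x k * hcoeff'

theorem abs_lt_one_of_legendre_recurrence (N : ℕ) (lam : ℝ) (x : ℕ → ℝ)
    (hx : ∃ m ≤ N, x m ≠ 0) (htop : x (N + 1) = 0)
    (hrec : ∀ m ≤ N, (2 * m + 1) * lam * x m = m * x (m - 1) + (m + 1) * x (m + 1)) :
    |lam| < 1 := by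
  by_contra! hlam
  obtain ⟨i, hi, hMmax⟩ := (Finset.range (N + 2)).exists_max_image (|x ·|) ⟨0, by simp⟩
  set M := |x i|
  have hMpos : 0 < M := by
    obtain ⟨m, hm, hxm⟩ := hx
    exact (abs_pos.2 hxm).trans_le (hMmax m (Finset.mem_range.2 (by omega)))
  set T := (Finset.range (N + 2)).filter (|x ·| = M)
  have hT : T.Nonempty := ⟨i, Finset.mem_filter.2 ⟨hi, rfl⟩⟩
  obtain ⟨hm, hxm⟩ := Finset.mem_filter.1 (T.max'_mem hT)
  set m := T.max' hT
  have hmN : m ≤ N := by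
    rw [Finset.mem_range] at hm
    by_contra h
    rw [show m = N + 1 by omega, htop, abs_zero] at hxm
    exact hMpos.ne hxm
  have hnext : |x (m + 1)| < M := by
    refine (hMmax _ (Finset.mem_range.2 (by omega))).lt_of_ne fun h => ?_
    have := T.le_max' (m + 1) (Finset.mem_filter.2 ⟨Finset.mem_range.2 (by omega), h⟩)
    omega
  have hprev : |x (m - 1)| ≤ M := hMmax _ (Finset.mem_range.2 (by omega))
  have hbound : (2 * m + 1) * M ≤ m * M + (m + 1) * |x (m + 1)| := calc
    (2 * m + 1) * M ≤ (2 * m + 1) * |lam| * |x m| := by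
      rw [hxm, mul_assoc]
      gcongr
      exact le_mul_of_one_le_left hMpos.le hlam
    _ = |m * x (m - 1) + (m + 1) * x (m + 1)| := by
      rw [← hrec m hmN, abs_mul, abs_mul, abs_of_pos (by positivity : (0:ℝ) < 2 * m + 1)]
    _ ≤ m * M + (m + 1) * |x (m + 1)| := by
      refine (abs_add_le _ _).trans ?_
      rw [abs_mul, abs_mul, Nat.abs_cast, abs_of_pos (by positivity : (0:ℝ) < m + 1)]
      gcongr
  have := mul_lt_mul_of_pos_left hnext (by positivity : (0 : ℝ) < m + 1)
  linarith

/-- Every eigenvalue `λ` of the symmetric tridiagonal 1-D P_N flux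
matrix `Ã` (with entries `Ã_{ℓ,ℓ+1} = Ã_{ℓ+1,ℓ} = (ℓ+1)/√((2ℓ+1)(2ℓ+3))` and zeros
elsewhere) satisfies `|λ| < 1`. -/
theorem stmt_14 (N : ℕ) (A : Matrix (Fin (N + 1)) (Fin (N + 1)) ℝ)
    (hA : ∀ ℓ ℓ' : Fin (N + 1), A ℓ ℓ' =
      (if (ℓ' : ℕ) = (ℓ : ℕ) + 1 then
        ((ℓ : ℕ) + 1 : ℝ) / Real.sqrt ((2 * (ℓ : ℕ) + 1) * (2 * (ℓ : ℕ) + 3)) else 0)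
      + (if (ℓ : ℕ) = (ℓ' : ℕ) + 1 then
        ((ℓ' : ℕ) + 1 : ℝ) / Real.sqrt ((2 * (ℓ' : ℕ) + 1) * (2 * (ℓ' : ℕ) + 3)) else 0))
    (lam : ℝ) (v : Fin (N + 1) → ℝ) (hv : v ≠ 0)
    (heig : A.mulVec v = lam • v) :
    |lam| < 1 := by
  set x : ℕ → ℝ := fun k => extendByZero v k / √(2 * k + 1)
  have hx : ∀ k : ℕ, extendByZero v k = √(2 * k + 1) * x k := fun k => by
    simp only [x]
    field_simp
  refine abs_lt_one_of_legendre_recurrence N lam x ?_ ?_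
    (legendre_recurrence_of_mulVec_eq A hA heig x hx)
  · obtain ⟨j, hj⟩ := Function.ne_iff.1 hv
    refine ⟨j, by omega, div_ne_zero ?_ (by positivity)⟩
    rw [extendByZero, dif_pos j.isLt]
    exact hj
  · simp [x, extendByZero]
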